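/- Let t : ℕ → ℝ with t_n ≥ 0 for all n, t not identically zero, with Σ_{j=0}^∞ t_j = 1 (t summable with sum 1), and let n_0 be the least index with t_{n_0} > 0. For n ≥ n_0 set ξ^{(n)}_j = t_j / (Σ_{i=0}^n t_i) ∈ stdSimplex ℝ (Fin (n+1)), let ξ^{(n)} be arbitrary in the simplex for n < n_0, define f_n(x)_j = x_j + x_{n+1}·ξ^{(n)}_j, and let Δ be the inverse limit, with extreme points e_n ∈ Δ (n ∈ ℕ) characterized by f_{∞,m}(e_n) = e_n^{(m)} for m ≥ n, and with e_∞ ∈ Δ the unique element satisfying f_{∞,n}(e_∞) = ξ^{(n)} for all n ≥ n_0. Then: (a) e_∞ is the infinite convex combination Σ_{j=0}^∞ t_j e_j, in the sense that for each m, the m-th coordinate of e_∞ equals the convergent series Σ_{j=0}^∞ t_j · f_{∞,m}(e_j) in Fin (m+1) → ℝ; and (b) if at least two of the t_j are nonzero, then e_∞ is not an extreme point of Δ, the set of extreme points of Δ equals exactly {e_n : n ∈ ℕ}, and this set is not closed (its closure also contains e_∞), so Δ is not a Bauer simplex. -/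

import Mathlib

/-!
Since `e_k` is the vertex `k` at every level `≥ k`, and the vertex `k` at level `k` is pulled
back to `ξ^{(k-1)}`, the threads `e_k` with `k ≥ n₀` agree with `e_∞` below level `k`. This
gives the series `e_∞ = Σ t_k e_k` level by level, and also `e_k → e_∞`.

For the extreme points, follow a coordinate `j` of a thread `x` up the tower: it is antitone.
If it stays above some `c > 0`, then `x - c e_j` is still nonnegative, so `x` is a proper
mixture of `e_j` and another point of `Δ` unless `x = e_j`. If every coordinate tends to `0`,
then, since the bonding maps add to `x_j` a multiple of `t_j` (for levels `≥ n₀`), the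
quantities `t_k x_j - t_j x_k` do not depend on the level, hence vanish, and `x = e_∞`. Finally
`e_∞` is not extreme because `e_∞ ≥ t_a e_a` with `0 < t_a < 1`.
-/

open Finset Filter Topology

theorem single_mem_extremePoints_stdSimplex {𝕜 ι : Type*} [Field 𝕜] [LinearOrder 𝕜]
    [IsStrictOrderedRing 𝕜] [Fintype ι] [DecidableEq ι] (i : ι) :
    Pi.single i 1 ∈ (stdSimplex 𝕜 ι).extremePoints 𝕜 := by
  refine ⟨single_mem_stdSimplex 𝕜 i, fun x hx y hy ⟨a, b, ha, hb, _, hxy⟩ => ?_⟩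
  have hzero : ∀ j, j ≠ i → x j = 0 := fun j hj => by
    have h := congr_fun hxy j
    simp only [Pi.add_apply, Pi.smul_apply, smul_eq_mul, Pi.single_eq_of_ne hj] at h
    nlinarith [hx.1 j, hy.1 j, mul_nonneg hb.le (hy.1 j)]
  have hi : x i = 1 := by
    rw [← hx.2, sum_eq_single i (fun j _ hj => hzero j hj) (by simp)]
  funext j
  by_cases hj : j = i
  · subst hj; simp [hi]
  · simp [Pi.single_eq_of_ne hj, hzero j hj]

namespace SimplexInverseLimit

abbrev Tower := ∀ n : ℕ, Fin (n + 1) → ℝ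

def threads (ξ : Tower) : Submodule ℝ Tower where
  carrier := {x | ∀ n (j : Fin (n + 1)),
    x (n + 1) j.castSucc + x (n + 1) (Fin.last (n + 1)) * ξ n j = x n j}
  add_mem' {x y} hx hy n j := by
    simp only [Pi.add_apply, ← hx n j, ← hy n j]; ring
  zero_mem' n j := by simp
  smul_mem' c x hx n j := by
    simp only [Pi.smul_apply, smul_eq_mul, ← hx n j]; ring

def invLimit (ξ : Tower) : Set Tower :=
  {x | (∀ n, x n ∈ stdSimplex ℝ (Fin (n + 1))) ∧ x ∈ threads ξ}

/-- Coordinate `j` of level `p`, as a function of natural numbers (`0` when `p < j`). -/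
def coord (x : Tower) (p j : ℕ) : ℝ := if h : j < p + 1 then x p ⟨j, h⟩ else 0

variable {ξ x y z : Tower}

theorem coord_val (x : Tower) {p : ℕ} (j : Fin (p + 1)) : coord x p j = x p j := by
  simp [coord, j.isLt]

theorem eq_of_level_eq (hx : x ∈ threads ξ) (hy : y ∈ threads ξ) {N : ℕ} (hN : x N = y N) :
    ∀ m ≤ N, x m = y m := by
  induction N with
  | zero => intro m hm; rwa [Nat.le_zero.1 hm]
  | succ N ih =>
    have hN' : x N = y N := funext fun j => by rw [← hx N j, ← hy N j, hN]
    intro m hm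
    rcases Nat.of_le_succ hm with hm | rfl
    exacts [ih hN' m hm, hN]

theorem eq_of_forall_ge (hx : x ∈ threads ξ) (hy : y ∈ threads ξ) {N : ℕ}
    (h : ∀ m, N ≤ m → x m = y m) : x = y :=
  funext fun m => eq_of_level_eq hx hy (h (max m N) (le_max_right _ _)) m (le_max_left _ _)

theorem nonneg_of_level_nonneg (hξ : ∀ n j, 0 ≤ ξ n j) (hx : x ∈ threads ξ) {N : ℕ}
    (hN : ∀ j, 0 ≤ x N j) : ∀ m ≤ N, ∀ j, 0 ≤ x m j := by
  induction N with
  | zero => intro m hm; rwa [Nat.le_zero.1 hm]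
  | succ N ih =>
    have hN' : ∀ j, 0 ≤ x N j := fun j => by
      rw [← hx N j]; exact add_nonneg (hN _) (mul_nonneg (hN _) (hξ N j))
    intro m hm
    rcases Nat.of_le_succ hm with hm | rfl
    exacts [ih hN' m hm, hN]

theorem level_eq_of_succ_eq_single (hx : x ∈ threads ξ) {n : ℕ}
    (h : ∀ j : Fin (n + 2), x (n + 1) j = if (j : ℕ) = n + 1 then 1 else 0) : x n = ξ n :=
  funext fun j => by
    rw [← hx n j, h, h]
    simp [j.isLt.ne]

theorem mem_extremePoints_of_forall_ge (hy : y ∈ invLimit ξ) {n : ℕ}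
    (h : ∀ m, n ≤ m → y m ∈ (stdSimplex ℝ (Fin (m + 1))).extremePoints ℝ) :
    y ∈ (invLimit ξ).extremePoints ℝ := by
  refine ⟨hy, fun x₁ hx₁ x₂ hx₂ ⟨a, b, ha, hb, hab, hseg⟩ => ?_⟩
  refine eq_of_forall_ge hx₁.2 hy.2 fun m hm =>
    (h m hm).2 (hx₁.1 m) (hx₂.1 m) ⟨a, b, ha, hb, hab, ?_⟩
  rw [← hseg]; rfl

theorem mem_extremePoints_of_eq_single (hx : x ∈ invLimit ξ) {n : ℕ}
    (hxn : ∀ m, n ≤ m → ∀ j : Fin (m + 1), x m j = if (j : ℕ) = n then 1 else 0) :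
    x ∈ (invLimit ξ).extremePoints ℝ :=
  mem_extremePoints_of_forall_ge hx (n := n) fun m hm => by
    have hsingle : x m = Pi.single (⟨n, by omega⟩ : Fin (m + 1)) 1 :=
      funext fun j => by simp [hxn m hm, Pi.single_apply, Fin.ext_iff]
    exact hsingle ▸ single_mem_extremePoints_stdSimplex _

theorem exists_mem_openSegment_of_smul_le (hx : x ∈ invLimit ξ) (hz : z ∈ invLimit ξ) {c : ℝ}
    (hc₀ : 0 < c) (hc₁ : c < 1) (hle : ∀ m j, c * z m j ≤ x m j) :
    ∃ y ∈ invLimit ξ, x ∈ openSegment ℝ z y := by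
  have hc : (1 - c) ≠ 0 := by linarith
  refine ⟨(1 - c)⁻¹ • (x - c • z), ⟨fun n => ⟨fun j => ?_, ?_⟩,
    (threads ξ).smul_mem _ ((threads ξ).sub_mem hx.2 ((threads ξ).smul_mem _ hz.2))⟩,
    ⟨c, 1 - c, hc₀, by linarith, by ring, ?_⟩⟩
  · simp only [Pi.smul_apply, Pi.sub_apply, smul_eq_mul]
    exact mul_nonneg (inv_nonneg.2 (by linarith)) (by linarith [hle n j])
  · simp only [Pi.smul_apply, Pi.sub_apply, smul_eq_mul, ← mul_sum, sum_sub_distrib,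
      (hx.1 n).2, (hz.1 n).2]
    field_simp
  · rw [smul_smul, mul_inv_cancel₀ hc, one_smul, add_sub_cancel]

theorem eq_of_mem_extremePoints_of_smul_le (hx : x ∈ (invLimit ξ).extremePoints ℝ)
    (hz : z ∈ invLimit ξ) {c : ℝ} (hc₀ : 0 < c) (hc₁ : c < 1) (hle : ∀ m j, c * z m j ≤ x m j) :
    z = x :=
  let ⟨_, hy, hseg⟩ := exists_mem_openSegment_of_smul_le hx.1 hz hc₀ hc₁ hle
  hx.2 hz hy hseg

theorem coord_nonneg (hx : ∀ n j, 0 ≤ x n j) (p j : ℕ) : 0 ≤ coord x p j := by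
  unfold coord; split_ifs
  exacts [hx p _, le_rfl]

theorem coord_eq_coord_succ (hx : x ∈ threads ξ) {p j : ℕ} (hj : j ≤ p) :
    coord x p j = coord x (p + 1) j + coord x (p + 1) (p + 1) * coord ξ p j := by
  simp only [coord, dif_pos (Nat.lt_succ_of_le hj), dif_pos (Nat.lt_succ_of_le hj.step),
    dif_pos (Nat.lt_succ_self (p + 1))]
  exact (hx p ⟨j, _⟩).symm

theorem coord_antitone (hξ : ∀ n j, 0 ≤ ξ n j) (hx : x ∈ invLimit ξ)
    {j p q : ℕ} (hjp : j ≤ p) (hpq : p ≤ q) : coord x q j ≤ coord x p j := by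
  induction q, hpq using Nat.le_induction with
  | base => exact le_rfl
  | succ q hpq ih =>
    refine le_trans ?_ ih
    rw [coord_eq_coord_succ hx.2 (hjp.trans hpq)]
    nlinarith [coord_nonneg (fun n => (hx.1 n).1) (q + 1) (q + 1),
      coord_nonneg hξ q j]

theorem exists_le_coord_or_tendsto_coord_zero (hξ : ∀ n j, 0 ≤ ξ n j)
    (hx : x ∈ invLimit ξ) (K : ℕ) :
    (∃ c > 0, ∀ m, K ≤ m → c ≤ coord x m K) ∨ Tendsto (fun p => coord x p K) atTop (𝓝 0) := by
  refine or_iff_not_imp_left.2 fun h => tendsto_order.2 ⟨fun a ha => .of_forall fun p =>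
    ha.trans_le (coord_nonneg (fun n => (hx.1 n).1) p K), fun b hb => ?_⟩
  push Not at h
  obtain ⟨m, hKm, hm⟩ := h b hb
  exact eventually_atTop.2 ⟨m, fun p hp => (coord_antitone hξ hx hKm hp).trans_lt hm⟩

theorem smul_le_of_le_coord (hξ : ∀ n j, 0 ≤ ξ n j) (hx : x ∈ invLimit ξ)
    (hz : z ∈ invLimit ξ) {K : ℕ}
    (hzK : ∀ m, K ≤ m → ∀ j : Fin (m + 1), z m j = if (j : ℕ) = K then 1 else 0)
    {c : ℝ} (hcx : ∀ m, K ≤ m → c ≤ coord x m K) :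
    ∀ m j, c * z m j ≤ x m j := by
  have hu := (threads ξ).sub_mem hx.2 ((threads ξ).smul_mem c hz.2)
  have hge : ∀ N, K ≤ N → ∀ j, 0 ≤ (x - c • z) N j := fun N hN j => by
    simp only [Pi.sub_apply, Pi.smul_apply, smul_eq_mul, hzK N hN j]
    split_ifs with hj
    · have := hcx N hN; rw [← hj, coord_val] at this; linarith
    · linarith [(hx.1 N).1 j]
  intro m j
  have := nonneg_of_level_nonneg hξ hu (hge (max m K) (le_max_right _ _)) m
    (le_max_left _ _) j
  simp only [Pi.sub_apply, Pi.smul_apply, smul_eq_mul] at this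
  linarith

section Weights

variable {t : ℕ → ℝ} {n₀ : ℕ}

theorem sum_range_succ_pos (ht : ∀ n, 0 ≤ t n) (hn₀ : 0 < t n₀) {m : ℕ} (hm : n₀ ≤ m) :
    0 < ∑ i ∈ range (m + 1), t i :=
  hn₀.trans_le (single_le_sum (fun i _ => ht i) (mem_range.2 (Nat.lt_succ_of_le hm)))

theorem div_sum_range_eq_ite (hn₀ : 0 < t n₀) (hn₀min : ∀ i, i < n₀ → t i = 0)
    (j : Fin (n₀ + 1)) :
    t j / ∑ i ∈ range (n₀ + 1), t i = if (j : ℕ) = n₀ then 1 else 0 := by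
  rw [sum_range_succ, sum_eq_zero fun i hi => hn₀min i (mem_range.1 hi), zero_add]
  split_ifs with hj
  · rw [hj, div_self hn₀.ne']
  · rw [hn₀min j (by omega), zero_div]

theorem sum_range_mul_eq (ht : ∀ n, 0 ≤ t n) (hn₀ : 0 < t n₀) (hn₀min : ∀ i, i < n₀ → t i = 0)
    {w : Tower} (hw : ∀ m, n₀ ≤ m → ∀ j : Fin (m + 1), w m j = t j / ∑ i ∈ range (m + 1), t i)
    (m : ℕ) (j : Fin (m + 1)) : (∑ i ∈ range (m + 1), t i) * w m j = t j := by
  by_cases hm : n₀ ≤ m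
  · rw [hw m hm, mul_div_cancel₀ _ (sum_range_succ_pos ht hn₀ hm).ne']
  · rw [sum_eq_zero fun i hi => hn₀min i (by simp at hi; omega), hn₀min j (by omega), zero_mul]

theorem hasSum_mul_of_head_tail (hsum : HasSum t 1) {g : ℕ → ℝ} {a : ℝ} {m j : ℕ} (hj : j ≤ m)
    (hhead : ∀ k ≤ m, g k = if j = k then 1 else 0) (htail : ∀ k, m < k → t k * g k = t k * a)
    (ha : (∑ i ∈ range (m + 1), t i) * a = t j) : HasSum (fun k => t k * g k) a := by
  have htail_sum : HasSum (fun k => t (k + (m + 1)) * g (k + (m + 1)))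
      ((1 - ∑ i ∈ range (m + 1), t i) * a) := by
    rw [funext fun k => htail (k + (m + 1)) (by omega)]
    refine ((hasSum_nat_add_iff (f := t) (m + 1)).2 ?_).mul_right a
    rwa [sub_add_cancel]
  have hhead_sum : ∑ k ∈ range (m + 1), t k * g k = t j := by
    rw [sum_congr rfl fun k hk =>
      congrArg (t k * ·) (hhead k (Nat.lt_succ_iff.1 (mem_range.1 hk)))]
    simp [Nat.lt_succ_of_le hj]
  have := (hasSum_nat_add_iff (f := fun k => t k * g k) (m + 1)).1 htail_sum
  rwa [hhead_sum, ← ha, ← add_mul, sub_add_cancel, one_mul] at this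

theorem cross_coord_eq (hξ : ∀ n, n₀ ≤ n → ∀ j : Fin (n + 1),
      ξ n j = t j / ∑ i ∈ range (n + 1), t i)
    (hx : x ∈ threads ξ) {m p j k : ℕ} (hm : n₀ ≤ m) (hmp : m ≤ p) (hj : j ≤ m) (hk : k ≤ m) :
    t k * coord x p j - t j * coord x p k = t k * coord x m j - t j * coord x m k := by
  induction p, hmp using Nat.le_induction with
  | base => rfl
  | succ p hmp ih =>
    have hstep : ∀ i ≤ p, coord x p i = coord x (p + 1) i
        + coord x (p + 1) (p + 1) * (t i / ∑ i ∈ range (p + 1), t i) := fun i hi => by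
      rw [coord_eq_coord_succ hx hi,
        show coord ξ p i = _ from coord_val ξ ⟨i, Nat.lt_succ_of_le hi⟩, hξ p (hm.trans hmp)]
    rw [← ih, hstep j (hj.trans hmp), hstep k (hk.trans hmp)]
    ring

theorem level_eq_of_tendsto_coord_zero (ht : ∀ n, 0 ≤ t n) (hn₀ : 0 < t n₀)
    (hξ : ∀ n, n₀ ≤ n → ∀ j : Fin (n + 1), ξ n j = t j / ∑ i ∈ range (n + 1), t i)
    (hx : x ∈ invLimit ξ) (h0 : ∀ K, Tendsto (fun p => coord x p K) atTop (𝓝 0))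
    {m : ℕ} (hm : n₀ ≤ m) : x m = ξ m := by
  have hcross : ∀ j : Fin (m + 1), t n₀ * x m j = t j * x m ⟨n₀, by omega⟩ := fun j => by
    have hlim := ((h0 j).const_mul (t n₀)).sub ((h0 n₀).const_mul (t j))
    rw [mul_zero, mul_zero, sub_zero] at hlim
    have hconst := tendsto_nhds_unique (tendsto_const_nhds.congr' (eventually_atTop.2
      ⟨m, fun p hp => (cross_coord_eq hξ hx.2 hm hp (Nat.lt_succ_iff.1 j.isLt) hm).symm⟩)) hlim
    rw [← coord_val x j, ← coord_val x ⟨n₀, _⟩]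
    exact sub_eq_zero.1 hconst
  have hnorm : t n₀ = (∑ i ∈ range (m + 1), t i) * x m ⟨n₀, by omega⟩ := by
    have := sum_congr rfl fun j (_ : j ∈ univ) => hcross j
    rwa [← mul_sum, (hx.1 m).2, mul_one, ← sum_mul, Fin.sum_univ_eq_sum_range] at this
  funext j
  rw [hξ m hm, eq_div_iff (sum_range_succ_pos ht hn₀ hm).ne']
  apply mul_left_cancel₀ hn₀.ne'
  linear_combination (∑ i ∈ range (m + 1), t i) * hcross j - t j * hnorm

theorem eq_below_of_level_eq_single (hn₀ : 0 < t n₀) (hn₀min : ∀ i, i < n₀ → t i = 0)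
    (hξ : ∀ n, n₀ ≤ n → ∀ j : Fin (n + 1), ξ n j = t j / ∑ i ∈ range (n + 1), t i)
    {w : Tower} (hw : w ∈ threads ξ) (hwξ : ∀ n, n₀ ≤ n → w n = ξ n)
    (hx : x ∈ threads ξ) {k : ℕ} (hk : n₀ ≤ k)
    (hxk : ∀ j : Fin (k + 1), x k j = if (j : ℕ) = k then 1 else 0) :
    ∀ m < k, x m = w m := by
  intro m hm
  rcases hk.eq_or_lt with rfl | hlt
  · refine eq_of_level_eq hx hw (funext fun j => ?_) m hm.le
    rw [hxk, hwξ _ le_rfl, hξ _ le_rfl, div_sum_range_eq_ite hn₀ hn₀min]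
  · obtain ⟨n, rfl⟩ : ∃ n, k = n + 1 := ⟨k - 1, by omega⟩
    exact eq_of_level_eq hx hw ((level_eq_of_succ_eq_single hx hxk).trans
      (hwξ n (by omega)).symm) m (by omega)

theorem ne_of_sum_range_mul_eq {w v : Tower}
    (hw : ∀ m (j : Fin (m + 1)), (∑ i ∈ range (m + 1), t i) * w m j = t j)
    {a b n : ℕ} (hab : a ≠ b) (ha : t a ≠ 0) (hb : t b ≠ 0)
    (hv : ∀ m, n ≤ m → ∀ j : Fin (m + 1), v m j = if (j : ℕ) = n then 1 else 0) : v ≠ w := by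
  rintro rfl
  have hsupp : ∀ i, i ≤ n + a + b → t i ≠ 0 → i = n := fun i hi hti => by
    by_contra hin
    have := hw (n + a + b) ⟨i, by omega⟩
    simp [hv _ (by omega : n ≤ n + a + b), hin] at this
    exact hti this.symm
  exact hab ((hsupp a (by omega) ha).trans (hsupp b (by omega) hb).symm)

theorem extremePoints_subset_insert (ht : ∀ n, 0 ≤ t n) (hn₀ : 0 < t n₀)
    (hξs : ∀ n j, 0 ≤ ξ n j)
    (hξ : ∀ n, n₀ ≤ n → ∀ j : Fin (n + 1), ξ n j = t j / ∑ i ∈ range (n + 1), t i)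
    {e : ℕ → Tower} (he : ∀ n, e n ∈ invLimit ξ)
    (hev : ∀ n m, n ≤ m → ∀ j : Fin (m + 1), e n m j = if (j : ℕ) = n then 1 else 0)
    {w : Tower} (hw : w ∈ threads ξ) (hwξ : ∀ n, n₀ ≤ n → w n = ξ n) :
    (invLimit ξ).extremePoints ℝ ⊆ insert w (Set.range e) := by
  intro x hx
  by_cases h0 : ∀ K, Tendsto (fun p => coord x p K) atTop (𝓝 0)
  · exact .inl <| eq_of_forall_ge hx.1.2 hw fun m hm =>
      (level_eq_of_tendsto_coord_zero ht hn₀ hξ hx.1 h0 hm).trans (hwξ m hm).symm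
  · push Not at h0
    obtain ⟨K, hK⟩ := h0
    obtain ⟨c, hc, hcx⟩ := (exists_le_coord_or_tendsto_coord_zero hξs hx.1 K).resolve_right hK
    refine .inr ⟨K, eq_of_mem_extremePoints_of_smul_le hx (he K) (c := min c (1 / 2))
      (by positivity) (by linarith [min_le_right c (1 / 2)]) ?_⟩
    exact smul_le_of_le_coord hξs hx.1 (he K) (hev K) fun m hm =>
      (min_le_left _ _).trans (hcx m hm)

theorem notMem_extremePoints_of_hasSum (ht : ∀ n, 0 ≤ t n) (hsum : HasSum t 1)
    {e : ℕ → Tower} (he : ∀ n, e n ∈ invLimit ξ) {w : Tower}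
    (hw : ∀ m (j : Fin (m + 1)), HasSum (fun k => t k * e k m j) (w m j))
    {a b : ℕ} (hab : a ≠ b) (ha : t a ≠ 0) (hb : t b ≠ 0) (hne : e a ≠ w) :
    w ∉ (invLimit ξ).extremePoints ℝ := by
  have hta : t a < 1 := by
    have := sum_le_hasSum {a, b} (fun i _ => ht i) hsum
    rw [sum_pair hab] at this
    linarith [(ht b).lt_of_ne' hb]
  exact fun hext => hne <| eq_of_mem_extremePoints_of_smul_le hext (he a) ((ht a).lt_of_ne' ha)
    hta fun m j => le_hasSum (hw m j) a fun k _ => mul_nonneg (ht k) (((he k).1 m).1 j)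

end Weights

end SimplexInverseLimit

open SimplexInverseLimit

/-- Stationary case with `Σ t_j = 1`: in the inverse limit `Δ` corresponding to
`ξ^{(n)}_j = t_j / Σ_{i≤n} t_i`, the distinguished element `e_∞` equals the infinite convex
combination `Σ_j t_j e_j` (coordinatewise convergent series); if at least two `t_j` are
nonzero, then `e_∞` is not extreme, the set of extreme points of `Δ` is exactly
`{e_n : n ∈ ℕ}`, and this set is not closed (its closure contains `e_∞`), so `Δ` is not a
Bauer simplex. -/
theorem stmt_13 (t : ℕ → ℝ) (ht : ∀ n, 0 ≤ t n) (hsum : HasSum t 1) (n₀ : ℕ)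
    (hn₀ : 0 < t n₀) (hn₀min : ∀ i, i < n₀ → t i = 0)
    (ξ : ∀ n : ℕ, Fin (n + 1) → ℝ)
    (hξsimplex : ∀ n, ξ n ∈ stdSimplex ℝ (Fin (n + 1)))
    (hξ : ∀ n, n₀ ≤ n → ∀ j : Fin (n + 1),
      ξ n j = t (j : ℕ) / ∑ i ∈ Finset.range (n + 1), t i)
    (Δ : Set (∀ n, Fin (n + 1) → ℝ))
    (hΔ : Δ = {x | (∀ n, x n ∈ stdSimplex ℝ (Fin (n + 1))) ∧
      ∀ n, ∀ j : Fin (n + 1),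
        x (n + 1) j.castSucc + x (n + 1) (Fin.last (n + 1)) * ξ n j = x n j})
    (e : ℕ → ∀ m : ℕ, Fin (m + 1) → ℝ)
    (heΔ : ∀ n, e n ∈ Δ)
    (he : ∀ n, ∀ m, n ≤ m → ∀ j : Fin (m + 1), e n m j = if (j : ℕ) = n then 1 else 0)
    (eInf : ∀ m : ℕ, Fin (m + 1) → ℝ)
    (heInfΔ : eInf ∈ Δ)
    (heInf : ∀ n, n₀ ≤ n → eInf n = ξ n) :
    (∀ (m : ℕ) (j : Fin (m + 1)), HasSum (fun k : ℕ => t k * e k m j) (eInf m j)) ∧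
    ((∃ a b : ℕ, a ≠ b ∧ t a ≠ 0 ∧ t b ≠ 0) →
      eInf ∉ Δ.extremePoints ℝ ∧
      Δ.extremePoints ℝ = Set.range e ∧
      eInf ∈ closure (Set.range e) ∧
      ¬ IsClosed (Δ.extremePoints ℝ)) := by
  have hΔξ : Δ = invLimit ξ := hΔ
  subst hΔξ
  have heInfξ : ∀ m, n₀ ≤ m → ∀ j : Fin (m + 1), eInf m j = t j / ∑ i ∈ range (m + 1), t i :=
    fun m hm j => by rw [heInf m hm, hξ m hm j]
  have hweights := sum_range_mul_eq ht hn₀ hn₀min heInfξ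
  have hagree : ∀ k m, n₀ ≤ k → m < k → e k m = eInf m := fun k m hk =>
    eq_below_of_level_eq_single hn₀ hn₀min hξ heInfΔ.2 heInf (heΔ k).2 hk (he k k le_rfl) m
  have hseries : ∀ m (j : Fin (m + 1)), HasSum (fun k => t k * e k m j) (eInf m j) :=
    fun m j => hasSum_mul_of_head_tail hsum (Nat.lt_succ_iff.1 j.isLt) (fun k hk => he k m hk j)
      (fun k hk => (le_or_gt n₀ k).elim (fun hk₀ => by rw [hagree k m hk₀ hk])
        fun hk₀ => by simp [hn₀min k hk₀]) (hweights m j)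
  refine ⟨hseries, fun ⟨a, b, hab, ha, hb⟩ => ?_⟩
  have hne : ∀ n, e n ≠ eInf := fun n => ne_of_sum_range_mul_eq hweights hab ha hb (he n)
  have hnotext := notMem_extremePoints_of_hasSum ht hsum heΔ hseries hab ha hb (hne a)
  have hext : (invLimit ξ).extremePoints ℝ = Set.range e := Set.Subset.antisymm
    (fun x hx => (extremePoints_subset_insert ht hn₀ (fun n => (hξsimplex n).1) hξ heΔ he
      heInfΔ.2 heInf hx).resolve_left fun h => hnotext (h ▸ hx))
    (Set.range_subset_iff.2 fun n => mem_extremePoints_of_eq_single (heΔ n) (he n))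
  have hcl : eInf ∈ closure (Set.range e) := mem_closure_of_tendsto
    (tendsto_pi_nhds.2 fun m => tendsto_const_nhds.congr' (eventually_atTop.2
      ⟨max n₀ (m + 1), fun k hk => (hagree k m (by omega) (by omega)).symm⟩))
    (.of_forall Set.mem_range_self)
  refine ⟨hnotext, hext, hcl, fun hclosed => ?_⟩
  obtain ⟨n, hn⟩ := (hext ▸ hclosed).closure_eq ▸ hcl
  exact hne n hn
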